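/- Let 0 < α < 1, c₁ + c₂ > 1 with c₁, c₂ > 0, and t ≥ 0. Then ∫₀¹ B_{1,c₁+c₂-1}(dy)·[1 + ((1+t)^α − 1)y]^{-c₁} = ∫₀¹ B_{c₁,c₂}(dy)·[1 + ((1+t)^α − 1)y]^{-1}, where B_{a,b} denotes the Beta(a,b) distribution on [0,1]. -/

import Mathlib

open MeasureTheory

/-- Beta(a,b) density on [0,1]. -/
noncomputable def betaDensity (a b u : ℝ) : ℝ :=
  Real.Gamma (a + b) / (Real.Gamma a * Real.Gamma b) * u ^ (a - 1) * (1 - u) ^ (b - 1)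

/-!
With `s = (1 + t) ^ α - 1 ≥ 0`, both sides are Euler integrals of the hypergeometric function
`₂F₁(1, c₁; c₁ + c₂; -s)`, one for each of its two symmetric upper parameters. Integrating the
kernel `(1 + s x y) ^ (-(c₁ + c₂))` against `B_{1, c₁+c₂-1}(dy) B_{c₁,c₂}(dx)` first in `x`
gives one side and first in `y` the other, by the identity
`∫ B_{p,q}(dx) (1 + w x) ^ (-(p + q)) = (1 + w) ^ (-p)`. That identity is the substitution
`x = u / (1 + w (1 - u))`, which maps `B_{p,q}(du)` to `(1 + w) ^ p (1 + w x) ^ (-(p + q)) B_{p,q}(dx)`.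
-/

open Set Real ProbabilityTheory

namespace ProbabilityTheory

lemma betaPDFReal_nonneg {p q : ℝ} (hp : 0 < p) (hq : 0 < q) (x : ℝ) : 0 ≤ betaPDFReal p q x := by
  by_cases hx : 0 < x ∧ x < 1
  · exact (betaPDFReal_pos hx.1 hx.2 hp hq).le
  · simp [betaPDFReal, hx]

lemma integrable_betaPDFReal {p q : ℝ} (hp : 0 < p) (hq : 0 < q) : Integrable (betaPDFReal p q) :=
  ⟨(measurable_betaPDFReal p q).aestronglyMeasurable,
    (hasFiniteIntegral_iff_ofReal (ae_of_all _ (betaPDFReal_nonneg hp hq))).2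
      ((lintegral_betaPDF_eq_one hp hq).trans_lt ENNReal.one_lt_top)⟩

lemma integral_betaPDFReal {p q : ℝ} (hp : 0 < p) (hq : 0 < q) : ∫ x, betaPDFReal p q x = 1 := by
  rw [integral_eq_lintegral_of_nonneg_ae (ae_of_all _ (betaPDFReal_nonneg hp hq))
    (measurable_betaPDFReal p q).aestronglyMeasurable]
  change (∫⁻ x, betaPDF p q x).toReal = 1
  simp [hp, hq]

end ProbabilityTheory

lemma betaDensity_eq_betaPDFReal {p q x : ℝ} (hx : x ∈ Ioo 0 1) :
    betaDensity p q x = betaPDFReal p q x := by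
  rw [betaPDFReal, if_pos (show 0 < x ∧ x < 1 from hx), betaDensity, beta, one_div_div]

@[fun_prop]
lemma measurable_betaDensity (p q : ℝ) : Measurable (betaDensity p q) := by
  unfold betaDensity; fun_prop

lemma integrableOn_betaDensity {p q : ℝ} (hp : 0 < p) (hq : 0 < q) :
    IntegrableOn (betaDensity p q) (Ioo 0 1) :=
  (integrable_betaPDFReal hp hq).integrableOn.congr_fun
    (fun _ hx ↦ (betaDensity_eq_betaPDFReal hx).symm) measurableSet_Ioo

lemma setIntegral_betaDensity {p q : ℝ} (hp : 0 < p) (hq : 0 < q) :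
    ∫ x in Ioo 0 1, betaDensity p q x = 1 := by
  rw [setIntegral_congr_fun measurableSet_Ioo (fun _ hx ↦ betaDensity_eq_betaPDFReal hx),
    setIntegral_eq_integral_of_forall_compl_eq_zero
      (fun x hx ↦ by simp [betaPDFReal, show ¬(0 < x ∧ x < 1) from hx]),
    integral_betaPDFReal hp hq]

lemma hasDerivAt_div_one_add_mul_one_sub {w u : ℝ} (hu : 1 + w * (1 - u) ≠ 0) :
    HasDerivAt (fun u ↦ u / (1 + w * (1 - u))) ((1 + w) / (1 + w * (1 - u)) ^ 2) u := by
  refine ((hasDerivAt_id u).div ((((hasDerivAt_id u).const_sub 1).const_mul w).const_add 1)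
    hu).congr_deriv ?_
  simp only [id]
  ring

lemma injOn_div_one_add_mul_one_sub {w : ℝ} (hw : 0 ≤ w) :
    InjOn (fun u ↦ u / (1 + w * (1 - u))) (Ioo 0 1) := by
  intro u hu v hv huv
  have hDu : 0 < 1 + w * (1 - u) := by nlinarith [hu.2]
  have hDv : 0 < 1 + w * (1 - v) := by nlinarith [hv.2]
  rw [div_eq_div_iff hDu.ne' hDv.ne'] at huv
  nlinarith

lemma image_div_one_add_mul_one_sub {w : ℝ} (hw : 0 ≤ w) :
    (fun u ↦ u / (1 + w * (1 - u))) '' Ioo 0 1 = Ioo 0 1 := by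
  ext x
  constructor
  · rintro ⟨u, hu, rfl⟩
    have hwu : 0 ≤ w * (1 - u) := mul_nonneg hw (sub_pos.2 hu.2).le
    have hD : 0 < 1 + w * (1 - u) := by linarith
    exact ⟨div_pos hu.1 hD, (div_lt_one hD).2 (by linarith [hu.2])⟩
  · rintro ⟨hx0, hx1⟩
    have hD : 0 < 1 + w * x := by nlinarith
    refine ⟨(1 + w) * x / (1 + w * x), ⟨by positivity, (div_lt_one hD).2 (by nlinarith)⟩, ?_⟩
    have hw1 : 1 + w ≠ 0 := by positivity
    have hD' : 1 + w * (1 - (1 + w) * x / (1 + w * x)) = (1 + w) / (1 + w * x) := by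
      field_simp
      ring
    simp only [hD']
    field_simp

lemma betaDensity_div_one_add_mul_one_sub (p q : ℝ) {w u : ℝ} (hw : 0 ≤ w) (hu : u ∈ Ioo 0 1) :
    betaDensity p q (u / (1 + w * (1 - u))) * (1 + w * (u / (1 + w * (1 - u)))) ^ (-(p + q))
        * ((1 + w) / (1 + w * (1 - u)) ^ 2)
      = (1 + w) ^ (-p) * betaDensity p q u := by
  obtain ⟨hu0, hu1⟩ := hu
  set D := 1 + w * (1 - u) with hD_def
  have hD : 0 < D := by nlinarith
  clear_value D
  have hW : 0 < 1 + w := by linarith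
  have h1 : 1 - u / D = (1 + w) * (1 - u) / D := by
    field_simp
    rw [hD_def]
    ring
  have h2 : 1 + w * (u / D) = (1 + w) / D := by
    field_simp
    rw [hD_def]
    ring
  have hW_pow : (1 + w) ^ (-p) = (1 + w) ^ (q - 1) * (1 + w) ^ (-(p + q)) * (1 + w) := by
    rw [← rpow_add hW, ← rpow_add_one hW.ne']
    ring_nf
  have hD_pow : D ^ (p - 1) * D ^ (q - 1) * D ^ (-(p + q)) * D ^ 2 = 1 := by
    rw [← rpow_natCast, ← rpow_add hD, ← rpow_add hD, ← rpow_add hD]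
    ring_nf
    exact rpow_zero D
  unfold betaDensity
  rw [h1, h2, div_rpow hu0.le hD.le, div_rpow (by nlinarith) hD.le, mul_rpow hW.le (by linarith),
    div_rpow hW.le hD.le, hW_pow]
  field_simp
  linear_combination (-Gamma (p + q) / (Gamma p * Gamma q)) * hD_pow

lemma setIntegral_betaDensity_mul_one_add_mul_rpow {p q w : ℝ} (hp : 0 < p) (hq : 0 < q)
    (hw : 0 ≤ w) :
    ∫ x in Ioo 0 1, betaDensity p q x * (1 + w * x) ^ (-(p + q)) = (1 + w) ^ (-p) := by
  have hW : 0 < 1 + w := by linarith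
  have hD : ∀ u ∈ Ioo (0 : ℝ) 1, 0 < 1 + w * (1 - u) := fun u hu ↦ by nlinarith [hu.2]
  have hderiv : ∀ u ∈ Ioo (0 : ℝ) 1, HasDerivWithinAt (fun u ↦ u / (1 + w * (1 - u)))
      ((1 + w) / (1 + w * (1 - u)) ^ 2) (Ioo 0 1) u :=
    fun u hu ↦ (hasDerivAt_div_one_add_mul_one_sub (hD u hu).ne').hasDerivWithinAt
  rw [← image_div_one_add_mul_one_sub hw, integral_image_eq_integral_abs_deriv_smul
    measurableSet_Ioo hderiv (injOn_div_one_add_mul_one_sub hw)]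
  calc _ = ∫ u in Ioo 0 1, (1 + w) ^ (-p) * betaDensity p q u := by
        refine setIntegral_congr_fun measurableSet_Ioo fun u hu ↦ ?_
        rw [smul_eq_mul, abs_of_pos (div_pos hW (pow_pos (hD u hu) 2)), mul_comm]
        exact betaDensity_div_one_add_mul_one_sub p q hw hu
    _ = (1 + w) ^ (-p) := by
        rw [integral_const_mul, setIntegral_betaDensity hp hq, mul_one]

theorem setIntegral_betaDensity_mul_one_add_mul_rpow_comm {a b c s : ℝ} (ha : 0 < a) (hb : 0 < b)
    (hac : a < c) (hbc : b < c) (hs : 0 ≤ s) :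
    ∫ y in Ioo 0 1, betaDensity a (c - a) y * (1 + s * y) ^ (-b)
      = ∫ x in Ioo 0 1, betaDensity b (c - b) x * (1 + s * x) ^ (-a) := by
  set K : ℝ → ℝ → ℝ := fun y x ↦
    (1 + s * y * x) ^ (-c) * (betaDensity a (c - a) y * betaDensity b (c - b) x) with hK_def
  have hK_int : Integrable (Function.uncurry K)
      ((volume.restrict (Ioo 0 1)).prod (volume.restrict (Ioo 0 1))) := by
    refine ((integrableOn_betaDensity ha (sub_pos.2 hac)).mul_prod
      (integrableOn_betaDensity hb (sub_pos.2 hbc))).bdd_mul (c := 1)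
      (Measurable.aestronglyMeasurable (by fun_prop)) ?_
    rw [Measure.prod_restrict]
    filter_upwards [ae_restrict_mem (measurableSet_Ioo.prod measurableSet_Ioo)] with z hz
    have hbase : 1 ≤ 1 + s * z.1 * z.2 := by
      have := mul_nonneg (mul_nonneg hs hz.1.1.le) hz.2.1.le
      linarith
    rw [Real.norm_of_nonneg (rpow_nonneg (by linarith) _)]
    exact rpow_le_one_of_one_le_of_nonpos hbase (by linarith)
  have h_kernel : ∀ {p : ℝ}, 0 < p → p < c → ∀ z ∈ Ioo (0 : ℝ) 1,
      ∫ x in Ioo 0 1, betaDensity p (c - p) x * (1 + s * z * x) ^ (-c) = (1 + s * z) ^ (-p) :=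
    fun hp hpc z hz ↦ by
      simpa only [add_sub_cancel] using setIntegral_betaDensity_mul_one_add_mul_rpow hp
        (sub_pos.2 hpc) (mul_nonneg hs hz.1.le)
  have h_inner_x : ∀ y ∈ Ioo (0 : ℝ) 1,
      ∫ x in Ioo 0 1, K y x = betaDensity a (c - a) y * (1 + s * y) ^ (-b) := by
    intro y hy
    rw [← h_kernel hb hbc y hy, ← integral_const_mul]
    refine setIntegral_congr_fun measurableSet_Ioo fun x _ ↦ ?_
    simp only [hK_def]
    ring
  have h_inner_y : ∀ x ∈ Ioo (0 : ℝ) 1,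
      ∫ y in Ioo 0 1, K y x = betaDensity b (c - b) x * (1 + s * x) ^ (-a) := by
    intro x hx
    rw [← h_kernel ha hac x hx, ← integral_const_mul]
    refine setIntegral_congr_fun measurableSet_Ioo fun y _ ↦ ?_
    simp only [hK_def, mul_right_comm s y x]
    ring
  calc _ = ∫ y in Ioo 0 1, ∫ x in Ioo 0 1, K y x :=
        (setIntegral_congr_fun measurableSet_Ioo h_inner_x).symm
    _ = ∫ x in Ioo 0 1, ∫ y in Ioo 0 1, K y x := integral_integral_swap hK_int
    _ = _ := setIntegral_congr_fun measurableSet_Ioo h_inner_y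

theorem stmt15_general (α c₁ c₂ t : ℝ) (hα : 0 < α) (hc₁ : 0 < c₁) (hc₂ : 0 < c₂)
    (hsum : 1 < c₁ + c₂) (ht : 0 ≤ t) :
    ∫ y in Set.Icc (0:ℝ) 1,
        betaDensity 1 (c₁ + c₂ - 1) y * (1 + ((1 + t) ^ α - 1) * y) ^ (-c₁)
      = ∫ y in Set.Icc (0:ℝ) 1,
          betaDensity c₁ c₂ y * (1 + ((1 + t) ^ α - 1) * y)⁻¹ := by
  have hs : 0 ≤ (1 + t) ^ α - 1 := sub_nonneg.2 (one_le_rpow (by linarith) hα.le)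
  have h := setIntegral_betaDensity_mul_one_add_mul_rpow_comm one_pos hc₁ hsum
    (lt_add_of_pos_right c₁ hc₂) hs
  simp only [add_sub_cancel_left, rpow_neg_one] at h
  rwa [integral_Icc_eq_integral_Ioo, integral_Icc_eq_integral_Ioo]

theorem stmt15 (α c₁ c₂ t : ℝ) (hα : 0 < α) (hα1 : α < 1) (hc₁ : 0 < c₁) (hc₂ : 0 < c₂)
    (hsum : 1 < c₁ + c₂) (ht : 0 ≤ t) :
    ∫ y in Set.Icc (0:ℝ) 1,
        betaDensity 1 (c₁ + c₂ - 1) y * (1 + ((1 + t) ^ α - 1) * y) ^ (-c₁)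
      = ∫ y in Set.Icc (0:ℝ) 1,
          betaDensity c₁ c₂ y * (1 + ((1 + t) ^ α - 1) * y)⁻¹ :=
  stmt15_general α c₁ c₂ t hα hc₁ hc₂ hsum ht
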